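/- Any deterministic finite automaton consistent with an observation table has at least as many states as the table has distinct rows: let Σ be a finite alphabet, let S, E ⊆ Σ* be finite sets of words, let T : Σ* → Bool be a function, and define row(s) : E → Bool by row(s)(e) = T(s·e). Suppose M is a deterministic finite automaton over Σ with a finite state type such that for every s ∈ S ∪ S·Σ and every e ∈ E, the word s·e is accepted by M if and only if T(s·e) = true. Then the cardinality of the state type of M is at least the cardinality of the set {row(s) : s ∈ S}. -/

import Mathlib

/-! Each state `q` of `M` has its own row `e ↦ [δ*(q, e) ∈ F]`, and consistency of `M` with the
table says that `row(s)` is the row of the state `δ*(q₀, s)`. So the distinct rows of the table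
are among the rows of the states, of which there are at most `|Q|`. -/

theorem Set.ncard_le_card_of_subset_range {ι β : Type*} [Finite ι] {s : Set β} {f : ι → β}
    (hs : s ⊆ Set.range f) : s.ncard ≤ Nat.card ι :=
  calc s.ncard ≤ (Set.range f).ncard := Set.ncard_le_ncard hs (Set.finite_range f)
    _ = Nat.card (Set.range f) := (Nat.card_coe_set_eq _).symm
    _ ≤ Nat.card ι := Finite.card_range_le f

namespace DFA

variable {α σ : Type*} (M : DFA α σ)

noncomputable def stateRow (E : Finset (List α)) (q : σ) : {e // e ∈ E} → Bool :=
  fun e => M.accept.boolIndicator (M.evalFrom q e.1)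

theorem mem_accepts_append_iff (s e : List α) :
    s ++ e ∈ M.accepts ↔ M.evalFrom (M.eval s) e ∈ M.accept := by
  rw [mem_accepts, eval, evalFrom_of_append]

theorem stateRow_eval {E : Finset (List α)} {T : List α → Bool} {s : List α}
    (hs : ∀ e ∈ E, (s ++ e ∈ M.accepts ↔ T (s ++ e) = true)) :
    M.stateRow E (M.eval s) = fun e => T (s ++ e.1) := by
  funext e
  rw [stateRow, Bool.eq_iff_iff, ← Set.mem_iff_boolIndicator, ← mem_accepts_append_iff]
  exact hs e e.2

end DFA

theorem card_rows_le_card_states_general {α Q : Type} [Fintype Q]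
    (M : DFA α Q) (S E : Finset (List α)) (T : List α → Bool)
    (hM : ∀ s : List α, (s ∈ S ∨ ∃ t ∈ S, ∃ a : α, s = t ++ [a]) →
      ∀ e ∈ E, (s ++ e ∈ M.accepts ↔ T (s ++ e) = true)) :
    Set.ncard {r : {e // e ∈ E} → Bool | ∃ s ∈ S, (fun e : {e // e ∈ E} => T (s ++ e.1)) = r}
      ≤ Fintype.card Q := by
  refine (Set.ncard_le_card_of_subset_range (f := M.stateRow E) ?_).trans_eq
    Nat.card_eq_fintype_card
  rintro r ⟨s, hs, rfl⟩
  exact ⟨M.eval s, M.stateRow_eval (hM s (Or.inl hs))⟩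

/-- Any deterministic finite automaton consistent with an observation
table has at least as many states as the table has distinct rows: if `Σ` is a finite
alphabet, `S, E ⊆ Σ*` are finite sets of words, `T : Σ* → Bool`, `row(s)(e) = T(s·e)`,
and `M` is a DFA over `Σ` with finite state type such that for every `s ∈ S ∪ S·Σ` and
every `e ∈ E` the word `s·e` is accepted by `M` iff `T(s·e) = true`, then the number of
states of `M` is at least the number of distinct rows `{row(s) : s ∈ S}`. -/
theorem card_rows_le_card_states {α Q : Type} [Fintype α] [Fintype Q]
    (M : DFA α Q) (S E : Finset (List α)) (T : List α → Bool)
    (hM : ∀ s : List α, (s ∈ S ∨ ∃ t ∈ S, ∃ a : α, s = t ++ [a]) →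
      ∀ e ∈ E, (s ++ e ∈ M.accepts ↔ T (s ++ e) = true)) :
    Set.ncard {r : {e // e ∈ E} → Bool | ∃ s ∈ S, (fun e : {e // e ∈ E} => T (s ++ e.1)) = r}
      ≤ Fintype.card Q :=
  card_rows_le_card_states_general M S E T hM
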